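/- Let D ≥ 1 be an integer and fix, for each coordinate i ∈ {1,…,D}, real numbers μ_{s,i}, μ_{t,i}, reals σ_{s,i} > 0, σ_{t,i} > 0, an integer n ≥ 2, a real N ≥ 0, and a real q > 0. On a probability space, let (μ̂_{t,i})_{i} and (σ̂²_{t,i})_{i} be real random variables such that for every i: μ̂_{t,i} is square-integrable with E[μ̂_{t,i}] = μ_{t,i} and Var[μ̂_{t,i}] = σ_{t,i}²/n; σ̂²_{t,i} is square-integrable with σ̂²_{t,i} ≥ q·σ_{t,i}²/n almost surely, E[σ̂²_{t,i}] = ((n−1)/n)·σ_{t,i}², and Var[σ̂²_{t,i}] = (2(n−1)/n²)·σ_{t,i}⁴. Define per coordinate μ̄_i = (N/(N+n))·μ_{s,i} + (n/(N+n))·μ̂_{t,i}, σ̄_i² = (N/(N+n))·σ_{s,i}² + (n/(N+n))·σ̂²_{t,i}, σ̄_i = √(σ̄_i²), and the multivariate squared Wasserstein-2 distance for diagonal covariances W₂² = Σ_{i=1}^{D} (σ_{t,i}² + σ̄_i² − 2·σ̄_i·σ_{t,i} + (μ̄_i − μ_{t,i})²). Then Σ_{i=1}^{D} L_i ≤ E[W₂²]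 ≤ Σ_{i=1}^{D} U_i, where for each i: L_i = (σ_{t,i} − √((N/(N+n))·σ_{s,i}² + ((n−1)/(N+n))·σ_{t,i}²))² + (N/(N+n))²·(μ_{t,i} − μ_{s,i})² + (n/(N+n)²)·σ_{t,i}², and U_i = L_i + σ_{t,i}⁵·((n−1)/(2·(N+n)²))·((N/(N+n))·σ_{s,i}² + (q/(N+n))·σ_{t,i}²)^(−3/2). -/

import Mathlib

open MeasureTheory ProbabilityTheory Real Finset

/-!
Coordinate by coordinate, `E[W₂²] = σₜ² + E σ̄² - 2 σₜ E σ̄ + Var μ̄ + (E μ̄ - μₜ)²`, and everything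
except `E σ̄ = E √(σ̄²)` is an explicit affine moment computation. Jensen's inequality for the
concave `√` gives `E σ̄ ≤ √(E σ̄²)`, hence the lower bound. For the upper bound, `√` lies above its
tangent at `m = E σ̄²` minus a quadratic term: `√z ≥ √m + (z - m)/(2√m) - (z - m)²/(8 z₀^{3/2})`
for `z, m ≥ z₀ > 0`, where `z₀ = (N/(N+n)) σₛ² + (q/(N+n)) σₜ²` is the almost sure lower bound on
`σ̄²`; taking expectations costs `Var σ̄² / (8 z₀^{3/2}) = (n/(N+n))² Var σ̂² / (8 z₀^{3/2})`.
Summing over coordinates gives the multivariate bounds.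
-/

/-- `W₂²(𝓝(μ, σ²), 𝓝(m, v))` for `σ ≥ 0`: the second Gaussian is given by its variance `v`. -/
noncomputable def gaussianW2Sq (μ σ m v : ℝ) : ℝ := σ ^ 2 + v - 2 * √v * σ + (m - μ) ^ 2

/-- `pooled N n μₛ μ̂ₜ` is the paper's `μ̄` and `pooled N n σₛ² σ̂²ₜ` its `σ̄²`. -/
noncomputable def pooled (N : ℝ) (n : ℕ) (s t : ℝ) : ℝ := N / (N + n) * s + n / (N + n) * t

lemma Real.sqrt_sub_sq_div_le_sqrt {z m z₀ : ℝ} (h₀ : 0 < z₀) (hz : z₀ ≤ z) (hm : z₀ ≤ m) :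
    √m + (z - m) / (2 * √m) - (z - m) ^ 2 / (8 * (z₀ * √z₀)) ≤ √z := by
  obtain ⟨u, hu, rfl⟩ : ∃ u, 0 < u ∧ z₀ = u ^ 2 := ⟨√z₀, sqrt_pos.2 h₀, (sq_sqrt h₀.le).symm⟩
  obtain ⟨s, hs, rfl⟩ : ∃ s, u ≤ s ∧ z = s ^ 2 :=
    ⟨√z, le_sqrt_of_sq_le hz, (sq_sqrt (h₀.le.trans hz)).symm⟩
  obtain ⟨t, ht, rfl⟩ : ∃ t, u ≤ t ∧ m = t ^ 2 :=
    ⟨√m, le_sqrt_of_sq_le hm, (sq_sqrt (h₀.le.trans hm)).symm⟩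
  rw [sqrt_sq hu.le, sqrt_sq (hu.le.trans hs), sqrt_sq (hu.le.trans ht)]
  have ht0 : 0 < t := hu.trans_le ht
  -- the tangent-line gap is `(s - t)² / (2t)`, and `s² - t² = (s - t)(s + t)`
  have hgap : t + (s ^ 2 - t ^ 2) / (2 * t) - s = (s - t) ^ 2 / (2 * t) := by
    field_simp
    ring
  have hden : 8 * (u ^ 2 * u) ≤ 2 * t * (s + t) ^ 2 := by
    have := mul_le_mul ht (pow_le_pow_left₀ (by positivity) (add_le_add hs ht) 2) (by positivity)
      ht0.le
    nlinarith
  have : (s - t) ^ 2 / (2 * t) ≤ (s ^ 2 - t ^ 2) ^ 2 / (8 * (u ^ 2 * u)) := by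
    rw [div_le_div_iff₀ (by positivity) (by positivity)]
    nlinarith [mul_le_mul_of_nonneg_left hden (sq_nonneg (s - t))]
  linarith

section

variable {Ω : Type*} [MeasurableSpace Ω] {P : Measure Ω} {X Y Z M : Ω → ℝ}

lemma MeasureTheory.Integrable.sqrt [IsFiniteMeasure P] (hZ : Integrable Z P) :
    Integrable (fun ω => √(Z ω)) P := by
  have hbound : Integrable (fun ω => |Z ω| + 1) P := hZ.abs.add (integrable_const 1)
  refine hbound.mono' hZ.1.aemeasurable.sqrt.aestronglyMeasurable (.of_forall fun ω => ?_)
  rw [norm_of_nonneg (sqrt_nonneg _), sqrt_le_iff]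
  exact ⟨by positivity, by nlinarith [le_abs_self (Z ω), abs_nonneg (Z ω)]⟩

lemma MeasureTheory.MemLp.pooled [IsFiniteMeasure P] {p : ENNReal} (hX : MemLp X p P)
    (N s : ℝ) (n : ℕ) : MemLp (fun ω => pooled N n s (X ω)) p P :=
  (memLp_const (N / (N + n) * s)).add (hX.const_mul ((n : ℝ) / (N + n)))

variable [IsProbabilityMeasure P]

lemma integral_sqrt_le_sqrt_integral (hZ : Integrable Z P) (h₀ : 0 ≤ᵐ[P] Z) :
    ∫ ω, √(Z ω) ∂P ≤ √(∫ ω, Z ω ∂P) :=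
  strictConcaveOn_sqrt.concaveOn.le_map_integral continuous_sqrt.continuousOn isClosed_Ici h₀ hZ
    hZ.sqrt

lemma sqrt_integral_sub_le_integral_sqrt (hZ : MemLp Z 2 P) {z₀ : ℝ} (h₀ : 0 < z₀)
    (hz₀ : ∀ᵐ ω ∂P, z₀ ≤ Z ω) :
    √(P[Z]) - Var[Z; P] / (8 * (z₀ * √z₀)) ≤ ∫ ω, √(Z ω) ∂P := by
  have hZi : Integrable Z P := hZ.integrable one_le_two
  set m := P[Z]
  have hm : z₀ ≤ m := by
    simpa using integral_mono_ae (integrable_const z₀) hZi hz₀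
  have hdev : Integrable (fun ω => (Z ω - m) / (2 * √m)) P :=
    (hZi.sub (integrable_const m)).div_const _
  have hsq : Integrable (fun ω => (Z ω - m) ^ 2 / (8 * (z₀ * √z₀))) P :=
    (hZ.sub (memLp_const m)).integrable_sq.div_const _
  have hlin : Integrable (fun ω => √m + (Z ω - m) / (2 * √m)) P := (integrable_const _).add hdev
  calc √m - Var[Z; P] / (8 * (z₀ * √z₀))
      = ∫ ω, (√m + (Z ω - m) / (2 * √m) - (Z ω - m) ^ 2 / (8 * (z₀ * √z₀))) ∂P := by
        rw [integral_sub hlin hsq, integral_add (integrable_const _) hdev, integral_div,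
          integral_div, integral_sub hZi (integrable_const m),
          variance_eq_integral hZi.aemeasurable]
        simp [m]
    _ ≤ ∫ ω, √(Z ω) ∂P :=
        integral_mono_ae (hlin.sub hsq) hZi.sqrt
          (hz₀.mono fun ω hω => sqrt_sub_sq_div_le_sqrt h₀ hω hm)

lemma integral_sub_const_sq (hM : MemLp M 2 P) (c : ℝ) :
    ∫ ω, (M ω - c) ^ 2 ∂P = Var[M; P] + (P[M] - c) ^ 2 := by
  have h := variance_eq_sub (hM.sub (memLp_const c))
  rw [show M - (fun _ => c) = fun ω => M ω - c from rfl, variance_sub_const hM.1] at h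
  rw [h, integral_sub (hM.integrable one_le_two) (integrable_const c)]
  simp

lemma integrable_gaussianW2Sq (hZ : Integrable Z P) (hM : MemLp M 2 P) (μ σ : ℝ) :
    Integrable (fun ω => gaussianW2Sq μ σ (M ω) (Z ω)) P :=
  (((integrable_const _).add hZ).sub ((hZ.sqrt.const_mul 2).mul_const σ)).add
    (hM.sub (memLp_const μ)).integrable_sq

lemma integral_gaussianW2Sq (hZ : Integrable Z P) (hM : MemLp M 2 P) (μ σ : ℝ) :
    ∫ ω, gaussianW2Sq μ σ (M ω) (Z ω) ∂P
      = σ ^ 2 + P[Z] - 2 * (∫ ω, √(Z ω) ∂P) * σ + (Var[M; P] + (P[M] - μ) ^ 2) := by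
  have h₁ : Integrable (fun ω => σ ^ 2 + Z ω) P := (integrable_const _).add hZ
  have h₂ : Integrable (fun ω => 2 * √(Z ω) * σ) P := (hZ.sqrt.const_mul 2).mul_const σ
  have h₃ : Integrable (fun ω => (M ω - μ) ^ 2) P := (hM.sub (memLp_const μ)).integrable_sq
  have h₁₂ : Integrable (fun ω => σ ^ 2 + Z ω - 2 * √(Z ω) * σ) P := h₁.sub h₂
  unfold gaussianW2Sq
  rw [integral_add h₁₂ h₃, integral_sub h₁ h₂, integral_add (integrable_const _) hZ,
    integral_mul_const, integral_const_mul, integral_sub_const_sq hM]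
  simp

lemma le_integral_gaussianW2Sq {σ : ℝ} (hσ : 0 ≤ σ) (hZ : Integrable Z P) (h₀ : 0 ≤ᵐ[P] Z)
    (hM : MemLp M 2 P) (μ : ℝ) :
    gaussianW2Sq μ σ P[M] P[Z] + Var[M; P] ≤ ∫ ω, gaussianW2Sq μ σ (M ω) (Z ω) ∂P := by
  rw [integral_gaussianW2Sq hZ hM μ σ, gaussianW2Sq]
  linarith [mul_le_mul_of_nonneg_right (integral_sqrt_le_sqrt_integral hZ h₀) hσ]

lemma integral_gaussianW2Sq_le {σ z₀ : ℝ} (hσ : 0 ≤ σ) (hZ : MemLp Z 2 P) (h₀ : 0 < z₀)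
    (hz₀ : ∀ᵐ ω ∂P, z₀ ≤ Z ω) (hM : MemLp M 2 P) (μ : ℝ) :
    ∫ ω, gaussianW2Sq μ σ (M ω) (Z ω) ∂P
      ≤ gaussianW2Sq μ σ P[M] P[Z] + Var[M; P] + σ * Var[Z; P] / (4 * (z₀ * √z₀)) := by
  rw [integral_gaussianW2Sq (hZ.integrable one_le_two) hM μ σ, gaussianW2Sq]
  have := mul_le_mul_of_nonneg_right (sqrt_integral_sub_le_integral_sqrt hZ h₀ hz₀) hσ
  have hdiv : σ * Var[Z; P] / (4 * (z₀ * √z₀)) = 2 * (Var[Z; P] / (8 * (z₀ * √z₀))) * σ := by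
    ring
  linarith

lemma integral_pooled (hX : Integrable X P) (N s : ℝ) (n : ℕ) :
    ∫ ω, pooled N n s (X ω) ∂P = pooled N n s P[X] := by
  unfold pooled
  rw [integral_add (integrable_const _) (hX.const_mul _)]
  simp [integral_const_mul]

lemma variance_pooled (hX : AEStronglyMeasurable X P) (N s : ℝ)
    (n : ℕ) : Var[fun ω => pooled N n s (X ω); P] = ((n : ℝ) / (N + n)) ^ 2 * Var[X; P] := by
  unfold pooled
  rw [variance_const_add (hX.const_mul _), variance_const_mul]

lemma Real.rpow_neg_three_halves {x : ℝ} (hx : 0 < x) : x ^ (-(3 : ℝ) / 2) = (x * √x)⁻¹ := by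
  rw [show -(3 : ℝ) / 2 = -(1 + 1 / 2) by norm_num, rpow_neg hx.le, rpow_add hx, rpow_one,
    ← sqrt_eq_rpow]

lemma gaussianW2Sq_integral_pooled_add_variance {μs μt σs σt N : ℝ}
    {n : ℕ} (hn : 1 ≤ n) (hN : 0 ≤ N) (hY : MemLp Y 2 P) (hYmean : P[Y] = μt)
    (hYvar : Var[Y; P] = σt ^ 2 / n) (hX : Integrable X P)
    (hXmean : P[X] = ((n : ℝ) - 1) / n * σt ^ 2) :
    gaussianW2Sq μt σt (∫ ω, pooled N n μs (Y ω) ∂P) (∫ ω, pooled N n (σs ^ 2) (X ω) ∂P)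
        + Var[fun ω => pooled N n μs (Y ω); P]
      = (σt - √(N / (N + n) * σs ^ 2 + ((n : ℝ) - 1) / (N + n) * σt ^ 2)) ^ 2
        + (N / (N + n)) ^ 2 * (μt - μs) ^ 2 + n / (N + n) ^ 2 * σt ^ 2 := by
  have hn₁ : (1 : ℝ) ≤ n := by exact_mod_cast hn
  have hNn : 0 < N + n := by linarith
  have hZmean : ∫ ω, pooled N n (σs ^ 2) (X ω) ∂P
      = N / (N + n) * σs ^ 2 + ((n : ℝ) - 1) / (N + n) * σt ^ 2 := by
    rw [integral_pooled hX, hXmean, pooled]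
    field_simp
  have hbias : ∫ ω, pooled N n μs (Y ω) ∂P - μt = N / (N + n) * (μs - μt) := by
    rw [integral_pooled (hY.integrable one_le_two), hYmean, pooled]
    field_simp
    ring
  have hMvar : Var[fun ω => pooled N n μs (Y ω); P] = n / (N + n) ^ 2 * σt ^ 2 := by
    rw [variance_pooled hY.1, hYvar]
    field_simp
  have hm := sq_sqrt (add_nonneg (by positivity)
    (mul_nonneg (div_nonneg (by linarith) hNn.le) (sq_nonneg σt)) :
      0 ≤ N / (N + n) * σs ^ 2 + ((n : ℝ) - 1) / (N + n) * σt ^ 2)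
  rw [gaussianW2Sq, hZmean, hbias, hMvar]
  linear_combination -hm

theorem pooled_gaussianW2Sq_expected_bounds {μs μt σs σt N q : ℝ}
    {n : ℕ} (hσt : 0 < σt) (hn : 2 ≤ n) (hN : 0 ≤ N) (hq : 0 < q)
    (hY : MemLp Y 2 P) (hYmean : P[Y] = μt) (hYvar : Var[Y; P] = σt ^ 2 / n)
    (hX : MemLp X 2 P) (hXlb : ∀ᵐ ω ∂P, q * σt ^ 2 / n ≤ X ω)
    (hXmean : P[X] = ((n : ℝ) - 1) / n * σt ^ 2)
    (hXvar : Var[X; P] = 2 * ((n : ℝ) - 1) / (n : ℝ) ^ 2 * σt ^ 4) :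
    Integrable (fun ω => gaussianW2Sq μt σt (pooled N n μs (Y ω)) (pooled N n (σs ^ 2) (X ω))) P
    ∧ ∫ ω, gaussianW2Sq μt σt (pooled N n μs (Y ω)) (pooled N n (σs ^ 2) (X ω)) ∂P ∈ Set.Icc
      ((σt - √(N / (N + n) * σs ^ 2 + ((n : ℝ) - 1) / (N + n) * σt ^ 2)) ^ 2
        + (N / (N + n)) ^ 2 * (μt - μs) ^ 2 + (n : ℝ) / (N + n) ^ 2 * σt ^ 2)
      (((σt - √(N / (N + n) * σs ^ 2 + ((n : ℝ) - 1) / (N + n) * σt ^ 2)) ^ 2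
        + (N / (N + n)) ^ 2 * (μt - μs) ^ 2 + (n : ℝ) / (N + n) ^ 2 * σt ^ 2)
        + σt ^ 5 * (((n : ℝ) - 1) / (2 * (N + n) ^ 2))
          * (N / (N + n) * σs ^ 2 + q / (N + n) * σt ^ 2) ^ (-(3 : ℝ) / 2)) := by
  set z₀ := N / (N + n) * σs ^ 2 + q / (N + n) * σt ^ 2
  have hZ := hX.pooled N (σs ^ 2) n
  have hM := hY.pooled N μs n
  have hZvar : Var[fun ω => pooled N n (σs ^ 2) (X ω); P]
      = 2 * ((n : ℝ) - 1) / (N + n) ^ 2 * σt ^ 4 := by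
    rw [variance_pooled hX.1, hXvar]
    field_simp
  have hz₀ : 0 < z₀ := by positivity
  have hZlb : ∀ᵐ ω ∂P, z₀ ≤ pooled N n (σs ^ 2) (X ω) := by
    filter_upwards [hXlb] with ω hω
    have : q / (N + n) * σt ^ 2 = n / (N + n) * (q * σt ^ 2 / n) := by field_simp
    simp only [z₀, pooled, this]
    gcongr
  have hL := gaussianW2Sq_integral_pooled_add_variance (μs := μs) (σs := σs) (by omega) hN hY
    hYmean hYvar (hX.integrable one_le_two) hXmean
  refine ⟨integrable_gaussianW2Sq (hZ.integrable one_le_two) hM μt σt, ?_, ?_⟩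
  · rw [← hL]
    exact le_integral_gaussianW2Sq hσt.le (hZ.integrable one_le_two)
      (hZlb.mono fun ω hω => hz₀.le.trans hω) hM μt
  · rw [← hL, rpow_neg_three_halves hz₀]
    refine (integral_gaussianW2Sq_le hσt.le hZ hz₀ hZlb hM μt).trans_eq ?_
    rw [hZvar]
    field_simp
    ring

end

theorem multivariate_wasserstein_expected_bounds_general
    {Ω : Type*} [MeasureSpace Ω] [IsProbabilityMeasure (ℙ : Measure Ω)]
    (D : ℕ)
    (μs μt σs σt : Fin D → ℝ) (N q : ℝ) (n : ℕ)
    (hσt : ∀ i, 0 < σt i)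
    (hn : 2 ≤ n) (hN : 0 ≤ N) (hq : 0 < q)
    (μthat σt2hat : Fin D → Ω → ℝ)
    (hμL2 : ∀ i, MemLp (μthat i) 2 ℙ)
    (hμmean : ∀ i, ∫ ω, μthat i ω = μt i)
    (hμvar : ∀ i, variance (μthat i) ℙ = σt i ^ 2 / n)
    (hσL2 : ∀ i, MemLp (σt2hat i) 2 ℙ)
    (hσlb : ∀ i, ∀ᵐ ω ∂(ℙ : Measure Ω), q * σt i ^ 2 / n ≤ σt2hat i ω)
    (hσmean : ∀ i, ∫ ω, σt2hat i ω = (((n : ℝ) - 1) / n) * σt i ^ 2)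
    (hσvar : ∀ i, variance (σt2hat i) ℙ = (2 * ((n : ℝ) - 1) / (n : ℝ) ^ 2) * σt i ^ 4) :
    (∑ i : Fin D,
        ((σt i - Real.sqrt (N / (N + n) * σs i ^ 2 + ((n : ℝ) - 1) / (N + n) * σt i ^ 2)) ^ 2
          + (N / (N + n)) ^ 2 * (μt i - μs i) ^ 2 + (n : ℝ) / (N + n) ^ 2 * σt i ^ 2))
      ≤ ∫ ω, ∑ i : Fin D,
          (σt i ^ 2 + (N / (N + n) * σs i ^ 2 + (n : ℝ) / (N + n) * σt2hat i ω)
            - 2 * Real.sqrt (N / (N + n) * σs i ^ 2 + (n : ℝ) / (N + n) * σt2hat i ω) * σt i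
            + ((N / (N + n) * μs i + (n : ℝ) / (N + n) * μthat i ω) - μt i) ^ 2)
    ∧ ∫ ω, ∑ i : Fin D,
          (σt i ^ 2 + (N / (N + n) * σs i ^ 2 + (n : ℝ) / (N + n) * σt2hat i ω)
            - 2 * Real.sqrt (N / (N + n) * σs i ^ 2 + (n : ℝ) / (N + n) * σt2hat i ω) * σt i
            + ((N / (N + n) * μs i + (n : ℝ) / (N + n) * μthat i ω) - μt i) ^ 2)
      ≤ ∑ i : Fin D,
          (((σt i - Real.sqrt (N / (N + n) * σs i ^ 2 + ((n : ℝ) - 1) / (N + n) * σt i ^ 2)) ^ 2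
            + (N / (N + n)) ^ 2 * (μt i - μs i) ^ 2 + (n : ℝ) / (N + n) ^ 2 * σt i ^ 2)
            + σt i ^ 5 * (((n : ℝ) - 1) / (2 * (N + n) ^ 2))
              * (N / (N + n) * σs i ^ 2 + q / (N + n) * σt i ^ 2) ^ (-(3 : ℝ) / 2)) := by
  choose hint hbounds using fun i => pooled_gaussianW2Sq_expected_bounds (μs := μs i)
    (σs := σs i) (hσt i) hn hN hq (hμL2 i) (hμmean i) (hμvar i) (hσL2 i) (hσlb i) (hσmean i)
    (hσvar i)
  have hsum := integral_finsetSum univ fun i _ => hint i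
  exact ⟨(sum_le_sum fun i _ => (hbounds i).1).trans_eq hsum.symm,
    hsum.trans_le (sum_le_sum fun i _ => (hbounds i).2)⟩

/-- Multivariate extension of Proposition 1 for Gaussians with diagonal
covariances: the expected multivariate squared Wasserstein-2 distance,
which decomposes as a sum over coordinates of the univariate expressions,
is bounded below by `Σᵢ Lᵢ` and above by `Σᵢ Uᵢ`. -/
theorem multivariate_wasserstein_expected_bounds
    {Ω : Type*} [MeasureSpace Ω] [IsProbabilityMeasure (ℙ : Measure Ω)]
    (D : ℕ) (hD : 1 ≤ D)
    (μs μt σs σt : Fin D → ℝ) (N q : ℝ) (n : ℕ)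
    (hσs : ∀ i, 0 < σs i) (hσt : ∀ i, 0 < σt i)
    (hn : 2 ≤ n) (hN : 0 ≤ N) (hq : 0 < q)
    (μthat σt2hat : Fin D → Ω → ℝ)
    (hμL2 : ∀ i, MemLp (μthat i) 2 ℙ)
    (hμmean : ∀ i, ∫ ω, μthat i ω = μt i)
    (hμvar : ∀ i, variance (μthat i) ℙ = σt i ^ 2 / n)
    (hσL2 : ∀ i, MemLp (σt2hat i) 2 ℙ)
    (hσlb : ∀ i, ∀ᵐ ω ∂(ℙ : Measure Ω), q * σt i ^ 2 / n ≤ σt2hat i ω)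
    (hσmean : ∀ i, ∫ ω, σt2hat i ω = (((n : ℝ) - 1) / n) * σt i ^ 2)
    (hσvar : ∀ i, variance (σt2hat i) ℙ = (2 * ((n : ℝ) - 1) / (n : ℝ) ^ 2) * σt i ^ 4) :
    (∑ i : Fin D,
        ((σt i - Real.sqrt (N / (N + n) * σs i ^ 2 + ((n : ℝ) - 1) / (N + n) * σt i ^ 2)) ^ 2
          + (N / (N + n)) ^ 2 * (μt i - μs i) ^ 2 + (n : ℝ) / (N + n) ^ 2 * σt i ^ 2))
      ≤ ∫ ω, ∑ i : Fin D,
          (σt i ^ 2 + (N / (N + n) * σs i ^ 2 + (n : ℝ) / (N + n) * σt2hat i ω)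
            - 2 * Real.sqrt (N / (N + n) * σs i ^ 2 + (n : ℝ) / (N + n) * σt2hat i ω) * σt i
            + ((N / (N + n) * μs i + (n : ℝ) / (N + n) * μthat i ω) - μt i) ^ 2)
    ∧ ∫ ω, ∑ i : Fin D,
          (σt i ^ 2 + (N / (N + n) * σs i ^ 2 + (n : ℝ) / (N + n) * σt2hat i ω)
            - 2 * Real.sqrt (N / (N + n) * σs i ^ 2 + (n : ℝ) / (N + n) * σt2hat i ω) * σt i
            + ((N / (N + n) * μs i + (n : ℝ) / (N + n) * μthat i ω) - μt i) ^ 2)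
      ≤ ∑ i : Fin D,
          (((σt i - Real.sqrt (N / (N + n) * σs i ^ 2 + ((n : ℝ) - 1) / (N + n) * σt i ^ 2)) ^ 2
            + (N / (N + n)) ^ 2 * (μt i - μs i) ^ 2 + (n : ℝ) / (N + n) ^ 2 * σt i ^ 2)
            + σt i ^ 5 * (((n : ℝ) - 1) / (2 * (N + n) ^ 2))
              * (N / (N + n) * σs i ^ 2 + q / (N + n) * σt i ^ 2) ^ (-(3 : ℝ) / 2)) :=
  multivariate_wasserstein_expected_bounds_general D μs μt σs σt N q n hσt hn hN hq μthat σt2hat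
    hμL2 hμmean hμvar hσL2 hσlb hσmean hσvar
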